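/- For every nonzero integer N and every Schwartz function ψ ∈ 𝒮(ℝ, ℂ), the Weil–Brezin–Zak transform is an L²-isometry onto the fundamental domain: ∫₀¹∫₀¹ |(W_N ψ)(x,y)|² dx dy = ∫_ℝ |ψ(x)|² dx. -/

import Mathlib

/-!
For fixed `x`, the function `y ↦ W_N ψ (x, y)` is an absolutely convergent Fourier series
with coefficients `ψ (x + k)` at the frequencies `-N k`, which are distinct because `N ≠ 0`;
Parseval's identity gives `∫₀¹ |W_N ψ (x, y)|² dy = ∑ₖ |ψ (x + k)|²`. Integrating this
periodization of `|ψ|²` over `x ∈ [0, 1]` gives `∫_ℝ |ψ|²`. Fubini applies because the decay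
of `ψ` makes the series converge locally uniformly, so `W_N ψ` is continuous.
-/

noncomputable section

/-- The Weil–Brezin–Zak transform `(W_N ψ)(x,y) = Σ_{k∈ℤ} ψ(x+k) e^{−2πiNky}`. -/
def WBZ (N : ℤ) (ψ : ℝ → ℂ) : ℝ × ℝ → ℂ := fun p =>
  ∑' k : ℤ, ψ (p.1 + k) * Complex.exp (-(2 * (Real.pi : ℂ) * Complex.I * (N : ℂ) * (k : ℂ) * (p.2 : ℂ)))

open MeasureTheory Set Complex Function TopologicalSpace Filter
open scoped Real ComplexConjugate SchwartzMap

section Integrals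

variable {E : Type*} [NormedAddCommGroup E] [NormedSpace ℝ E]

theorem intervalIntegral.integral_tsum_of_norm_le [CompleteSpace E] {ι : Type*} [Countable ι]
    {F : ι → ℝ → E} {u : ι → ℝ} {a b : ℝ} (hF : ∀ i, Continuous (F i)) (hu : Summable u)
    (hFu : ∀ i t, ‖F i t‖ ≤ u i) :
    ∫ t in a..b, ∑' i, F i t = ∑' i, ∫ t in a..b, F i t :=
  (intervalIntegral.hasSum_integral_of_dominated_convergence (fun i _ => u i)
    (fun i => (hF i).aestronglyMeasurable) (fun i => ae_of_all _ fun t _ => hFu i t)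
    (ae_of_all _ fun _ _ => hu) intervalIntegrable_const
    (ae_of_all _ fun t _ => (hu.of_norm_bounded (hFu · t)).hasSum)).tsum_eq.symm

theorem MeasureTheory.Integrable.intervalIntegral_tsum_comp_add_int {g : ℝ → E}
    (hg : Integrable g) : ∫ x in (0:ℝ)..1, ∑' n : ℤ, g (x + n) = ∫ x, g x := by
  rw [intervalIntegral.integral_of_le zero_le_one, ← integral_tsum_of_summable_integral_norm]
  · simpa only [intervalIntegral.integral_of_le zero_le_one] using
      hg.hasSum_intervalIntegral_comp_add_int.tsum_eq
  · exact fun n => (hg.comp_add_right n).integrableOn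
  · simpa only [intervalIntegral.integral_of_le zero_le_one] using
      hg.norm.hasSum_intervalIntegral_comp_add_int.summable

end Integrals

section FourierSeries

theorem norm_exp_two_pi_I_int_mul (n : ℤ) (y : ℝ) : ‖cexp (2 * π * I * n * y)‖ = 1 := by
  simp [norm_exp]

theorem integral_exp_two_pi_I_int_mul (n : ℤ) :
    ∫ y in (0:ℝ)..1, cexp (2 * π * I * n * y) = if n = 0 then 1 else 0 := by
  split_ifs with hn
  · simp [hn]
  · have hc : 2 * π * I * n ≠ 0 := by simp [hn, Real.pi_ne_zero, I_ne_zero]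
    rw [integral_exp_mul_complex hc, ofReal_one, mul_one, ofReal_zero, mul_zero,
      show 2 * π * I * n = n * (2 * π * I) by ring, exp_int_mul_two_pi_mul_I]
    simp

theorem conj_exp_two_pi_I_mul_exp (m n : ℤ) (y : ℝ) :
    conj (cexp (2 * π * I * m * y)) * cexp (2 * π * I * n * y) =
      cexp (2 * π * I * (n - m : ℤ) * y) := by
  rw [← exp_conj, ← exp_add]
  congr 1
  simp only [map_mul, map_ofNat, conj_ofReal, conj_I, map_intCast]
  push_cast
  ring

variable {ι : Type*} {ν : ι → ℤ} {a : ι → ℂ}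

theorem continuous_tsum_exp_two_pi_I (ha : Summable (‖a ·‖)) :
    Continuous fun y : ℝ => ∑' j, a j * cexp (2 * π * I * ν j * y) :=
  continuous_tsum (fun j => by fun_prop) ha fun j y => by
    rw [norm_mul, norm_exp_two_pi_I_int_mul, mul_one]

theorem integral_conj_exp_mul_tsum [Countable ι] (hν : Injective ν) (ha : Summable (‖a ·‖))
    (i : ι) :
    ∫ y in (0:ℝ)..1,
      conj (cexp (2 * π * I * ν i * y)) * ∑' j, a j * cexp (2 * π * I * ν j * y) = a i := by
  classical
  simp_rw [← tsum_mul_left, mul_left_comm _ (a _), conj_exp_two_pi_I_mul_exp]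
  rw [intervalIntegral.integral_tsum_of_norm_le (fun j => by fun_prop) ha fun j y => by
    rw [norm_mul, norm_exp_two_pi_I_int_mul, mul_one]]
  simp only [intervalIntegral.integral_const_mul, integral_exp_two_pi_I_int_mul, sub_eq_zero,
    hν.eq_iff, mul_ite, mul_one, mul_zero]
  exact tsum_ite_eq i a

theorem integral_norm_tsum_exp_two_pi_I_sq [Countable ι] (hν : Injective ν)
    (ha : Summable (‖a ·‖)) :
    ∫ y in (0:ℝ)..1, ‖∑' j, a j * cexp (2 * π * I * ν j * y)‖ ^ 2 = ∑' j, ‖a j‖ ^ 2 := by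
  set S := fun y : ℝ => ∑' j, a j * cexp (2 * π * I * ν j * y)
  have hS_le : ∀ y, ‖S y‖ ≤ ∑' j, ‖a j‖ := fun y => by
    refine (norm_tsum_le_tsum_norm ?_).trans_eq (tsum_congr fun j => ?_) <;>
      simp only [norm_mul, norm_exp_two_pi_I_int_mul, mul_one, ha]
  apply ofReal_injective
  calc ((∫ y in (0:ℝ)..1, ‖S y‖ ^ 2 : ℝ) : ℂ)
      = ∫ y in (0:ℝ)..1, ∑' i, conj (a i) * (conj (cexp (2 * π * I * ν i * y)) * S y) := by
        rw [← intervalIntegral.integral_ofReal]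
        congr 1 with y
        rw [ofReal_pow, ← conj_mul', conj_tsum, ← tsum_mul_right]
        simp only [map_mul, mul_assoc]
    _ = ∑' i, conj (a i) * a i := by
        rw [intervalIntegral.integral_tsum_of_norm_le (u := fun i => ‖a i‖ * ∑' j, ‖a j‖)
          (fun i => by have := continuous_tsum_exp_two_pi_I (ν := ν) ha; fun_prop)
          (ha.mul_right _) fun i y => ?_]
        · simp_rw [intervalIntegral.integral_const_mul, S, integral_conj_exp_mul_tsum hν ha]
        · rw [norm_mul, norm_mul, RCLike.norm_conj, RCLike.norm_conj, norm_exp_two_pi_I_int_mul,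
            one_mul]
          gcongr
          exact hS_le y
    _ = ((∑' i, ‖a i‖ ^ 2 : ℝ) : ℂ) := by
        rw [ofReal_tsum]
        simp_rw [conj_mul', ofReal_pow]

end FourierSeries

theorem SchwartzMap.exists_summable_bound_comp_add_int {E : Type*} [NormedAddCommGroup E]
    [NormedSpace ℝ E] (ψ : 𝓢(ℝ, E)) (K : Compacts ℝ) :
    ∃ u : ℤ → ℝ, Summable u ∧ ∀ n : ℤ, ∀ x ∈ K, ‖ψ (x + n)‖ ≤ u n :=
  ⟨fun n => ‖((ψ : C(ℝ, E)).comp (ContinuousMap.addRight n)).restrict K‖,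
    summable_of_isBigO (Real.summable_abs_int_rpow one_lt_two)
      ((isBigO_norm_restrict_cocompact _ two_pos (ψ.isBigO_cocompact_rpow (-2)) K).comp_tendsto
        Int.tendsto_coe_cofinite),
    fun n x hx => (((ψ : C(ℝ, E)).comp (ContinuousMap.addRight (n : ℝ))).restrict
      (K : Set ℝ)).norm_coe_le_norm ⟨x, hx⟩⟩

theorem WBZ_eq_tsum_exp (N : ℤ) (ψ : ℝ → ℂ) (p : ℝ × ℝ) :
    WBZ N ψ p = ∑' k : ℤ, ψ (p.1 + k) * cexp (2 * π * I * (-(N * k) : ℤ) * p.2) := by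
  refine tsum_congr fun k => ?_
  congr 2
  push_cast
  ring

theorem continuous_WBZ (N : ℤ) (ψ : 𝓢(ℝ, ℂ)) : Continuous (WBZ N ψ) := by
  refine continuous_iff_continuousAt.2 fun p => ?_
  obtain ⟨u, hu, hψu⟩ :=
    ψ.exists_summable_bound_comp_add_int ⟨Icc (p.1 - 1) (p.1 + 1), isCompact_Icc⟩
  have hcont : ContinuousOn (WBZ N ψ) (Icc (p.1 - 1) (p.1 + 1) ×ˢ univ) := by
    simp_rw [funext (WBZ_eq_tsum_exp N ψ)]
    refine continuousOn_tsum (fun k => Continuous.continuousOn ?_) hu fun k q hq => ?_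
    · have := ψ.continuous
      fun_prop
    · rw [norm_mul, norm_exp_two_pi_I_int_mul, mul_one]
      exact hψu k q.1 hq.1
  exact hcont.continuousAt (prod_mem_nhds (Icc_mem_nhds (by linarith) (by linarith)) univ_mem)

/-- The Weil–Brezin–Zak transform is an `L²`-isometry onto the fundamental domain:
`∫₀¹∫₀¹ |(W_N ψ)(x,y)|² dx dy = ∫_ℝ |ψ(x)|² dx`. -/
theorem wbz_isometry (N : ℤ) (hN : N ≠ 0) (ψ : SchwartzMap ℝ ℂ) :
    (∫ y in (0:ℝ)..1, ∫ x in (0:ℝ)..1, ‖WBZ N ⇑ψ (x, y)‖ ^ 2) =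
      ∫ x : ℝ, ‖ψ x‖ ^ 2 := by
  have hν : Injective fun k : ℤ => -(N * k) := neg_injective.comp (mul_right_injective₀ hN)
  have hsq : IntegrableOn (uncurry fun x y => ‖WBZ N ψ (x, y)‖ ^ 2) (uIoc 0 1 ×ˢ uIoc 0 1) := by
    rw [uIoc_of_le zero_le_one]
    exact ((continuous_WBZ N ψ).norm.pow 2).continuousOn.integrableOn_compact
      (isCompact_Icc.prod isCompact_Icc) |>.mono_set
        (prod_mono Ioc_subset_Icc_self Ioc_subset_Icc_self)
  obtain ⟨u, hu, hψu⟩ := ψ.exists_summable_bound_comp_add_int ⟨Icc 0 1, isCompact_Icc⟩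
  calc _ = ∫ x in (0:ℝ)..1, ∫ y in (0:ℝ)..1, ‖WBZ N ψ (x, y)‖ ^ 2 :=
        (intervalIntegral_intervalIntegral_swap hsq).symm
    _ = ∫ x in (0:ℝ)..1, ∑' k : ℤ, ‖ψ (x + k)‖ ^ 2 := by
        refine intervalIntegral.integral_congr fun x hx => ?_
        rw [uIcc_of_le zero_le_one] at hx
        simp_rw [WBZ_eq_tsum_exp]
        exact integral_norm_tsum_exp_two_pi_I_sq hν
          (hu.of_nonneg_of_le (fun _ => norm_nonneg _) (hψu · x hx))
    _ = ∫ x, ‖ψ x‖ ^ 2 :=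
        ((ψ.memLp 2).integrable_norm_pow two_ne_zero).intervalIntegral_tsum_comp_add_int
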